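/- Let α ∈ {2,3,4} be a theta index and {β,γ} = {2,3,4}∖{α}, and let z, q ∈ ℂ be such that every theta function appearing in a denominator below is nonzero. With φ(x,u) = θ₁′(0)·θ₁(x+u)/(θ₁(x)·θ₁(u)), one has θ_α(z−2q)·φ(2q,z) − θ_α(z+2q)·φ(−2q,z) = 2·θ₁′(0)·θ_α(z)·θ_β(2q)·θ_γ(2q) / ( θ_β(0)·θ_γ(0)·θ₁(2q) ). -/

import Mathlib

noncomputable section

open Complex Matrix
open scoped Matrix Kronecker

namespace RvD

/-- First Jacobi theta function of modulus `τ`. -/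
def th1 (τ u : ℂ) : ℂ :=
  -I * ∑' k : ℤ, (-1 : ℂ) ^ k *
    Complex.exp ((Real.pi : ℂ) * I * τ * ((k : ℂ) + 1/2)^2 + (Real.pi : ℂ) * I * (2*(k : ℂ) + 1) * u)

def th2 (τ u : ℂ) : ℂ := th1 τ (u + 1/2)

def th3 (τ u : ℂ) : ℂ :=
  Complex.exp ((Real.pi : ℂ) * I * τ / 4 + (Real.pi : ℂ) * I * u) * th1 τ (u + (1 + τ)/2)

def th4 (τ u : ℂ) : ℂ :=
  -I * Complex.exp ((Real.pi : ℂ) * I * τ / 4 + (Real.pi : ℂ) * I * u) * th1 τ (u + τ/2)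

/-- `th τ a = θ_{a+1}` for `a = 0,1,2,3`. -/
def th (τ : ℂ) : Fin 4 → ℂ → ℂ
  | 0 => th1 τ
  | 1 => th2 τ
  | 2 => th3 τ
  | 3 => th4 τ

/-- Half-periods `ω₀=0, ω₁=1/2, ω₂=(1+τ)/2, ω₃=τ/2`. -/
def om (τ : ℂ) : Fin 4 → ℂ
  | 0 => 0
  | 1 => 1/2
  | 2 => (1 + τ)/2
  | 3 => τ/2

/-- Derivative `θ₁′`. -/
def th1d (τ : ℂ) : ℂ → ℂ := deriv (th1 τ)

/-- `E₁(z) = θ₁′(z)/θ₁(z)`. -/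
def E1 (τ z : ℂ) : ℂ := th1d τ z / th1 τ z

/-- Weierstrass `℘(z) = −E₁′(z) + θ₁′′′(0)/(3θ₁′(0))`. -/
def wp (τ z : ℂ) : ℂ := -deriv (E1 τ) z + iteratedDeriv 3 (th1 τ) 0 / (3 * th1d τ 0)

/-- `ψ_a(z,y) = θ₁′(0)·θ_{a+1}(z+y)/(θ₁(z)·θ_{a+1}(y))`. -/
def psi (τ : ℂ) (a : Fin 4) (z y : ℂ) : ℂ := th1d τ 0 * th τ a (z + y) / (th1 τ z * th τ a y)

/-- `φ_α(z) = ψ_α(z,0)` (used for α = 1,2,3). -/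
def ph (τ : ℂ) (a : Fin 4) (z : ℂ) : ℂ := psi τ a z 0

/-- `v(z,u|ν) = ∑_{a=0}^{3} ν_a ψ_a(2z,u)`. -/
def vf (τ : ℂ) (ν : Fin 4 → ℂ) (z u : ℂ) : ℂ := ∑ a : Fin 4, ν a * psi τ a (2*z) u

/-- Dual parameters `ν̆`. -/
def dual (ν : Fin 4 → ℂ) : Fin 4 → ℂ
  | 0 => (ν 0 + ν 1 + ν 2 + ν 3)/2
  | 1 => (ν 0 + ν 1 - ν 2 - ν 3)/2
  | 2 => (ν 0 - ν 1 + ν 2 - ν 3)/2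
  | 3 => (ν 0 - ν 1 - ν 2 + ν 3)/2

/-- Pauli matrices (`pauli 0 = σ₀` is the identity). -/
def pauli : Fin 4 → Matrix (Fin 2) (Fin 2) ℂ
  | 0 => 1
  | 1 => !![0, 1; 1, 0]
  | 2 => !![0, -I; I, 0]
  | 3 => !![1, 0; 0, -1]

/-- Classical elliptic r-matrix `r(x) = (1/2)∑_{α=1}^{3} φ_α(x) σ_{4−α}⊗σ_{4−α}`. -/
def rmat (τ x : ℂ) : Matrix (Fin 2 × Fin 2) (Fin 2 × Fin 2) ℂ :=
  (1/2 : ℂ) • (ph τ 1 x • (pauli 3 ⊗ₖ pauli 3) + ph τ 2 x • (pauli 2 ⊗ₖ pauli 2)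
    + ph τ 3 x • (pauli 1 ⊗ₖ pauli 1))

/-- Canonical Poisson bracket `{f,g} = ∂_p f ∂_q g − ∂_q f ∂_p g`. -/
def pb (f g : ℂ → ℂ → ℂ) (p q : ℂ) : ℂ :=
  deriv (fun p' => f p' q) p * deriv (fun q' => g p q') q
  - deriv (fun q' => f p q') q * deriv (fun p' => g p' q) p

end RvD

/-!
Write `θ₁, …, θ₄` as theta series `ϑ[c, 0]` with characteristic `c ∈ {0, 1/2}`. The substitution
`(m, n) ↦ (m + n, m - n)` in the double series turns `ϑ[c, 0](s + t) · ϑ[c', 0](s - t)` into a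
sum of two products of theta series of modulus `τ / 2`, each a function of `s` times a function of `t`.
In `θ_α(s - t) θ₁(s + t) + θ_α(s + t) θ₁(s - t)` these terms combine into a single product
`A(s) B(t)`, while `θ_β(t) θ_γ(t)` is a constant multiple of `B(t)`. Comparing `t = w` with `t = 0`
gives the addition formula
`(θ_α(z - w) θ₁(z + w) + θ_α(z + w) θ₁(z - w)) θ_β(0) θ_γ(0) = 2 θ_α(z) θ₁(z) θ_β(w) θ_γ(w)`,
which is the claimed identity with denominators cleared, `θ₁` being odd.
-/

open Real

namespace RvD

theorem two_mul_tsum_mul_add_sub {𝕜 : Type*} [NormedField 𝕜] [CompleteSpace 𝕜] {F G : ℤ → 𝕜}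
    (hF : Summable fun k => ‖F k‖) (hG : Summable fun k => ‖G k‖) :
    2 * ∑' mn : ℤ × ℤ, F (mn.1 + mn.2) * G (mn.1 - mn.2)
      = (∑' k, F k) * (∑' k, G k) + (∑' k, (-1) ^ k * F k) * ∑' k, (-1) ^ k * G k := by
  have hF' : Summable fun k => ‖(-1 : 𝕜) ^ k * F k‖ := by simpa using hF
  have hG' : Summable fun k => ‖(-1 : 𝕜) ^ k * G k‖ := by simpa using hG
  set H : ℤ × ℤ → 𝕜 := fun pd => F pd.1 * G pd.2 + (-1) ^ pd.1 * F pd.1 * ((-1) ^ pd.2 * G pd.2)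
  have hsign (p d : ℤ) : (-1 : 𝕜) ^ p * (-1) ^ d = (-1) ^ (p + d) :=
    (zpow_add₀ (neg_ne_zero.mpr one_ne_zero) p d).symm
  have hH (m n : ℤ) : H (m + n, m - n) = 2 * (F (m + n) * G (m - n)) := by
    have : (-1 : 𝕜) ^ (m + n) * (-1) ^ (m - n) = 1 := by
      rw [hsign, show m + n + (m - n) = 2 * m by ring, _root_.zpow_mul]; norm_num
    linear_combination F (m + n) * G (m - n) * this
  -- `H (p, d) = 0` when `p + d` is odd.
  have hsupp : Function.support H ⊆ Set.range fun mn : ℤ × ℤ => (mn.1 + mn.2, mn.1 - mn.2) := by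
    rintro ⟨p, d⟩ hpd
    obtain ⟨m, hm⟩ : Even (p + d) := by
      by_contra hodd
      apply hpd
      have : (-1 : 𝕜) ^ p * (-1) ^ d = -1 := by
        rw [hsign, (Int.not_even_iff_odd.mp hodd).neg_one_zpow]
      linear_combination F p * G d * this
    exact ⟨(m, p - m), by ext <;> dsimp only <;> omega⟩
  have hinj : Function.Injective fun mn : ℤ × ℤ => (mn.1 + mn.2, mn.1 - mn.2) := by
    rintro ⟨m, n⟩ ⟨m', n'⟩ h
    simp only [Prod.mk.injEq] at h
    ext <;> omega
  calc 2 * ∑' mn : ℤ × ℤ, F (mn.1 + mn.2) * G (mn.1 - mn.2)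
      = ∑' mn : ℤ × ℤ, H (mn.1 + mn.2, mn.1 - mn.2) := by
        rw [← tsum_mul_left]; exact tsum_congr fun mn => (hH mn.1 mn.2).symm
    _ = ∑' pd, H pd := hinj.tsum_eq hsupp
    _ = _ := by
        rw [(summable_mul_of_summable_norm hF hG).tsum_add (summable_mul_of_summable_norm hF' hG'),
          tsum_mul_tsum_of_summable_norm hF hG, tsum_mul_tsum_of_summable_norm hF' hG']

def thetaCharTerm (τ c u : ℂ) (k : ℤ) : ℂ :=
  cexp (π * I * τ * (k + c) ^ 2 + 2 * π * I * (k + c) * u)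

/-- The theta function `ϑ[c, 0](u | τ)` with characteristic `c`. -/
def thetaChar (τ c u : ℂ) : ℂ :=
  ∑' k : ℤ, thetaCharTerm τ c u k

theorem summable_norm_thetaCharTerm {τ : ℂ} (hτ : 0 < τ.im) (c u : ℂ) :
    Summable fun k => ‖thetaCharTerm τ c u k‖ := by
  have hterm (k : ℤ) : thetaCharTerm τ c u k
      = cexp (π * I * τ * c ^ 2 + 2 * π * I * c * u) * jacobiTheta₂_term k (u + c * τ) τ := by
    rw [thetaCharTerm, jacobiTheta₂_term, ← Complex.exp_add]
    ring_nf
  simp_rw [hterm, norm_mul]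
  exact (((summable_jacobiTheta₂_term_iff _ τ).mpr hτ).norm).mul_left _

theorem thetaChar_add_one (τ c u : ℂ) :
    thetaChar τ c (u + 1) = cexp (2 * π * I * c) * thetaChar τ c u := by
  rw [thetaChar, thetaChar, ← tsum_mul_left]
  refine tsum_congr fun k => ?_
  rw [thetaCharTerm, thetaCharTerm, ← Complex.exp_add, Complex.exp_eq_exp_iff_exists_int]
  exact ⟨k, by ring⟩

theorem thetaChar_char_add_one (τ c u : ℂ) : thetaChar τ (c + 1) u = thetaChar τ c u := by
  rw [thetaChar, thetaChar, ← (Equiv.addRight (1 : ℤ)).tsum_eq (thetaCharTerm τ c u)]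
  refine tsum_congr fun k => ?_
  simp only [thetaCharTerm, Equiv.coe_addRight, Int.cast_add, Int.cast_one, add_assoc, add_comm 1 c]

theorem thetaChar_neg (τ c u : ℂ) : thetaChar τ c (-u) = thetaChar τ (-c) u := by
  rw [thetaChar, thetaChar, ← (Equiv.neg ℤ).tsum_eq]
  refine tsum_congr fun k => ?_
  simp only [thetaCharTerm, Equiv.neg_apply, Int.cast_neg]
  ring_nf

theorem thetaChar_add_tau_div_two (τ c u : ℂ) :
    thetaChar τ c (u + τ / 2)
      = cexp (-(π * I * τ / 4) - π * I * u) * thetaChar τ (c + 1 / 2) u := by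
  rw [thetaChar, thetaChar, ← tsum_mul_left]
  refine tsum_congr fun k => ?_
  rw [thetaCharTerm, thetaCharTerm, ← Complex.exp_add]
  ring_nf

theorem tsum_neg_one_zpow_mul_thetaCharTerm (τ c u : ℂ) :
    ∑' k : ℤ, (-1) ^ k * thetaCharTerm τ c u k
      = cexp (-(π * I * c)) * thetaChar τ c (u + 1 / 2) := by
  rw [thetaChar, ← tsum_mul_left]
  refine tsum_congr fun k => ?_
  rw [← Complex.exp_pi_mul_I, ← Complex.exp_int_mul, thetaCharTerm, thetaCharTerm,
    ← Complex.exp_add, ← Complex.exp_add]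
  ring_nf

theorem two_mul_thetaChar_mul_thetaChar {τ : ℂ} (hτ : 0 < τ.im) (c c' s t : ℂ) :
    2 * (thetaChar τ c (s + t) * thetaChar τ c' (s - t))
      = thetaChar (τ / 2) (c + c') s * thetaChar (τ / 2) (c - c') t
        + cexp (-(2 * π * I * c))
          * (thetaChar (τ / 2) (c + c') (s + 1 / 2) * thetaChar (τ / 2) (c - c') (t + 1 / 2)) := by
  have hτ₂ : 0 < (τ / 2).im := by simpa using hτ
  -- `(m + c)² + (n + c')² = ((m + n + c + c')² + (m - n + c - c')²) / 2`
  have hprod : thetaChar τ c (s + t) * thetaChar τ c' (s - t)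
      = ∑' mn : ℤ × ℤ, thetaCharTerm (τ / 2) (c + c') s (mn.1 + mn.2)
          * thetaCharTerm (τ / 2) (c - c') t (mn.1 - mn.2) := by
    rw [thetaChar, thetaChar, tsum_mul_tsum_of_summable_norm (summable_norm_thetaCharTerm hτ _ _)
      (summable_norm_thetaCharTerm hτ _ _)]
    refine tsum_congr fun mn => ?_
    simp only [thetaCharTerm, ← Complex.exp_add]
    push_cast
    ring_nf
  have hexp :
      cexp (-(2 * π * I * c)) = cexp (-(π * I * (c + c'))) * cexp (-(π * I * (c - c'))) := by
    rw [← Complex.exp_add]; ring_nf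
  rw [hprod, two_mul_tsum_mul_add_sub (summable_norm_thetaCharTerm hτ₂ _ _)
    (summable_norm_thetaCharTerm hτ₂ _ _), tsum_neg_one_zpow_mul_thetaCharTerm,
    tsum_neg_one_zpow_mul_thetaCharTerm, hexp, ← thetaChar, ← thetaChar]
  ring

theorem thetaChar_one (τ u : ℂ) : thetaChar τ 1 u = thetaChar τ 0 u := by
  simpa using thetaChar_char_add_one τ 0 u

theorem thetaChar_neg_half (τ u : ℂ) : thetaChar τ (-(1 / 2)) u = thetaChar τ (1 / 2) u := by
  rw [← thetaChar_char_add_one]; norm_num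

theorem thetaChar_zero_add_one (τ u : ℂ) : thetaChar τ 0 (u + 1) = thetaChar τ 0 u := by
  simp [thetaChar_add_one]

theorem thetaChar_half_add_one (τ u : ℂ) :
    thetaChar τ (1 / 2) (u + 1) = -thetaChar τ (1 / 2) u := by
  rw [thetaChar_add_one, show 2 * (π : ℂ) * I * (1 / 2) = π * I by ring, Complex.exp_pi_mul_I]
  ring

theorem thetaChar_zero_neg (τ u : ℂ) : thetaChar τ 0 (-u) = thetaChar τ 0 u := by
  simp [thetaChar_neg]

theorem thetaChar_half_neg (τ u : ℂ) : thetaChar τ (1 / 2) (-u) = thetaChar τ (1 / 2) u := by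
  rw [thetaChar_neg, thetaChar_neg_half]

theorem thetaChar_half_half (τ : ℂ) : thetaChar τ (1 / 2) (1 / 2) = 0 := by
  have h := thetaChar_half_add_one τ (-(1 / 2))
  rw [show -(1 / 2) + 1 = (1 / 2 : ℂ) by ring, thetaChar_half_neg] at h
  linear_combination h / 2

theorem th1_eq (τ u : ℂ) : th1 τ u = -thetaChar τ (1 / 2) (u + 1 / 2) := by
  rw [th1, thetaChar, ← tsum_neg, ← tsum_mul_left]
  refine tsum_congr fun k => ?_
  have h : thetaCharTerm τ (1 / 2) (u + 1 / 2) k = cexp (π / 2 * I) * cexp (k * (π * I))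
      * cexp (π * I * τ * (k + 1 / 2) ^ 2 + π * I * (2 * k + 1) * u) := by
    rw [thetaCharTerm, ← Complex.exp_add, ← Complex.exp_add]; ring_nf
  rw [h, exp_pi_div_two_mul_I, Complex.exp_int_mul, Complex.exp_pi_mul_I]
  ring

theorem th2_eq (τ u : ℂ) : th2 τ u = thetaChar τ (1 / 2) u := by
  rw [th2, th1_eq, add_assoc, add_halves, thetaChar_half_add_one, neg_neg]

theorem th3_eq (τ u : ℂ) : th3 τ u = thetaChar τ 0 u := by
  rw [th3, th1_eq, show u + (1 + τ) / 2 + 1 / 2 = u + 1 + τ / 2 by ring, thetaChar_add_tau_div_two,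
    add_halves, thetaChar_one, thetaChar_zero_add_one, mul_neg, ← mul_assoc, ← Complex.exp_add,
    show π * I * τ / 4 + π * I * u + (-(π * I * τ / 4) - π * I * (u + 1)) = -(π * I) by ring,
    Complex.exp_neg, Complex.exp_pi_mul_I]
  ring

theorem th4_eq (τ u : ℂ) : th4 τ u = thetaChar τ 0 (u + 1 / 2) := by
  rw [th4, th1_eq, show u + τ / 2 + 1 / 2 = u + 1 / 2 + τ / 2 by ring, thetaChar_add_tau_div_two,
    add_halves, thetaChar_one, mul_neg, mul_assoc, ← mul_assoc (cexp _), ← Complex.exp_add,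
    show π * I * τ / 4 + π * I * u + (-(π * I * τ / 4) - π * I * (u + 1 / 2)) = -(π / 2 * I) by
      ring,
    Complex.exp_neg, exp_pi_div_two_mul_I, Complex.inv_I]
  ring_nf
  rw [Complex.I_sq]
  ring

theorem th1_neg (τ u : ℂ) : th1 τ (-u) = -th1 τ u := by
  rw [th1_eq, th1_eq, show -u + 1 / 2 = -(u - 1 / 2) by ring, thetaChar_half_neg,
    ← thetaChar_half_add_one, show u - 1 / 2 + 1 = u + 1 / 2 by ring, neg_neg]

section ProductFormulas

variable {τ : ℂ} (hτ : 0 < τ.im) (s t : ℂ)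
include hτ

theorem two_mul_thetaChar_half_mul_half :
    2 * (thetaChar τ (1 / 2) (s + t) * thetaChar τ (1 / 2) (s - t))
      = thetaChar (τ / 2) 0 s * thetaChar (τ / 2) 0 t
        - thetaChar (τ / 2) 0 (s + 1 / 2) * thetaChar (τ / 2) 0 (t + 1 / 2) := by
  rw [two_mul_thetaChar_mul_thetaChar hτ, add_halves, sub_self, thetaChar_one, thetaChar_one,
    show -(2 * (π : ℂ) * I * (1 / 2)) = -(π * I) by ring, Complex.exp_neg, Complex.exp_pi_mul_I]
  ring

theorem two_mul_thetaChar_zero_mul_zero :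
    2 * (thetaChar τ 0 (s + t) * thetaChar τ 0 (s - t))
      = thetaChar (τ / 2) 0 s * thetaChar (τ / 2) 0 t
        + thetaChar (τ / 2) 0 (s + 1 / 2) * thetaChar (τ / 2) 0 (t + 1 / 2) := by
  simp [two_mul_thetaChar_mul_thetaChar hτ]

theorem two_mul_thetaChar_half_mul_zero :
    2 * (thetaChar τ (1 / 2) (s + t) * thetaChar τ 0 (s - t))
      = thetaChar (τ / 2) (1 / 2) s * thetaChar (τ / 2) (1 / 2) t
        - thetaChar (τ / 2) (1 / 2) (s + 1 / 2) * thetaChar (τ / 2) (1 / 2) (t + 1 / 2) := by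
  rw [two_mul_thetaChar_mul_thetaChar hτ, add_zero, sub_zero,
    show -(2 * (π : ℂ) * I * (1 / 2)) = -(π * I) by ring, Complex.exp_neg, Complex.exp_pi_mul_I]
  ring

theorem two_mul_thetaChar_zero_mul_half :
    2 * (thetaChar τ 0 (s + t) * thetaChar τ (1 / 2) (s - t))
      = thetaChar (τ / 2) (1 / 2) s * thetaChar (τ / 2) (1 / 2) t
        + thetaChar (τ / 2) (1 / 2) (s + 1 / 2) * thetaChar (τ / 2) (1 / 2) (t + 1 / 2) := by
  rw [two_mul_thetaChar_mul_thetaChar hτ, zero_add, zero_sub, thetaChar_neg_half,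
    thetaChar_neg_half]
  simp

end ProductFormulas

theorem addition_formula_of_factorization {f g h k A B : ℂ → ℂ} {κ : ℂ}
    (hfg : ∀ s t, 2 * (f (s - t) * g (s + t) + f (s + t) * g (s - t)) = A s * B t)
    (hhk : ∀ s, 2 * (h s * k s) = κ * B s) (z w : ℂ) :
    (f (z - w) * g (z + w) + f (z + w) * g (z - w)) * (h 0 * k 0)
      = 2 * (f z * g z) * (h w * k w) := by
  have hzw := hfg z w
  have hz0 := hfg z 0
  rw [sub_zero, add_zero] at hz0
  have h0 := hhk 0
  have hw := hhk w
  linear_combination (2 * (h 0 * k 0) * hzw + A z * B w * h0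
    - 2 * (h w * k w) * hz0 - A z * B 0 * hw) / 4

section Factorizations

variable {τ : ℂ} (hτ : 0 < τ.im) (s t : ℂ)
include hτ

theorem two_mul_th2_sub_mul_th1_add_add :
    2 * (th2 τ (s - t) * th1 τ (s + t) + th2 τ (s + t) * th1 τ (s - t))
      = (thetaChar (τ / 2) 0 (s + 3 / 4) - thetaChar (τ / 2) 0 (s + 1 / 4))
        * (thetaChar (τ / 2) 0 (t + 1 / 4) + thetaChar (τ / 2) 0 (t - 1 / 4)) := by
  have h₁ := two_mul_thetaChar_half_mul_half hτ (s + 1 / 4) (t + 1 / 4)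
  have h₂ := two_mul_thetaChar_half_mul_half hτ (s + 1 / 4) (t - 1 / 4)
  have hper := thetaChar_zero_add_one (τ / 2) (t - 1 / 4)
  rw [th2_eq, th2_eq, th1_eq, th1_eq]
  linear_combination (norm := ring_nf) -h₁ - h₂ + thetaChar (τ / 2) 0 (s + 3 / 4) * hper

theorem two_mul_th3_mul_th4 :
    2 * (th3 τ s * th4 τ s) = thetaChar (τ / 2) 0 (1 / 4)
      * (thetaChar (τ / 2) 0 (s + 1 / 4) + thetaChar (τ / 2) 0 (s - 1 / 4)) := by
  have h := two_mul_thetaChar_zero_mul_zero hτ (s + 1 / 4) (-(1 / 4))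
  have hper := thetaChar_zero_add_one (τ / 2) (s - 1 / 4)
  rw [thetaChar_zero_neg] at h
  rw [th3_eq, th4_eq]
  linear_combination (norm := ring_nf) h + thetaChar (τ / 2) 0 (1 / 4) * hper

theorem two_mul_th3_sub_mul_th1_add_add :
    2 * (th3 τ (s - t) * th1 τ (s + t) + th3 τ (s + t) * th1 τ (s - t))
      = -(thetaChar (τ / 2) (1 / 2) (s + 1 / 4) + thetaChar (τ / 2) (1 / 2) (s + 3 / 4))
        * (thetaChar (τ / 2) (1 / 2) (t + 1 / 4) + thetaChar (τ / 2) (1 / 2) (t - 1 / 4)) := by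
  have h₁ := two_mul_thetaChar_half_mul_zero hτ (s + 1 / 4) (t + 1 / 4)
  have h₂ := two_mul_thetaChar_zero_mul_half hτ (s + 1 / 4) (t - 1 / 4)
  have hper := thetaChar_half_add_one (τ / 2) (t - 1 / 4)
  rw [th3_eq, th3_eq, th1_eq, th1_eq]
  linear_combination (norm := ring_nf) -h₁ - h₂ + thetaChar (τ / 2) (1 / 2) (s + 3 / 4) * hper

theorem two_mul_th2_mul_th4 :
    2 * (th2 τ s * th4 τ s) = thetaChar (τ / 2) (1 / 2) (1 / 4)
      * (thetaChar (τ / 2) (1 / 2) (s + 1 / 4) + thetaChar (τ / 2) (1 / 2) (s - 1 / 4)) := by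
  have h := two_mul_thetaChar_half_mul_zero hτ (s + 1 / 4) (-(1 / 4))
  have hper := thetaChar_half_add_one (τ / 2) (s - 1 / 4)
  rw [thetaChar_half_neg] at h
  rw [th2_eq, th4_eq]
  linear_combination (norm := ring_nf) h - thetaChar (τ / 2) (1 / 2) (1 / 4) * hper

theorem two_mul_th4_sub_mul_th1_add_add :
    2 * (th4 τ (s - t) * th1 τ (s + t) + th4 τ (s + t) * th1 τ (s - t))
      = -(2 * thetaChar (τ / 2) (1 / 2) (s + 1 / 2)) * thetaChar (τ / 2) (1 / 2) t := by
  have h₁ := two_mul_thetaChar_half_mul_zero hτ (s + 1 / 2) t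
  have h₂ := two_mul_thetaChar_zero_mul_half hτ (s + 1 / 2) t
  rw [th4_eq, th4_eq, th1_eq, th1_eq]
  linear_combination (norm := ring_nf) -h₁ - h₂

theorem two_mul_th2_mul_th3 :
    2 * (th2 τ s * th3 τ s) = thetaChar (τ / 2) (1 / 2) 0 * thetaChar (τ / 2) (1 / 2) s := by
  have h := two_mul_thetaChar_half_mul_zero hτ s 0
  rw [add_zero, sub_zero, zero_add, thetaChar_half_half] at h
  rw [th2_eq, th3_eq]
  linear_combination h

end Factorizations

theorem th_addition_formula {τ : ℂ} (hτ : 0 < τ.im) {a b c : Fin 4}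
    (ha : a ≠ 0) (hb : b ≠ 0) (hc : c ≠ 0) (hab : a ≠ b) (hac : a ≠ c) (hbc : b ≠ c) (z w : ℂ) :
    (th τ a (z - w) * th1 τ (z + w) + th τ a (z + w) * th1 τ (z - w)) * (th τ b 0 * th τ c 0)
      = 2 * (th τ a z * th1 τ z) * (th τ b w * th τ c w) := by
  wlog hlt : b < c generalizing b c
  · have := this hc hb hac hab hbc.symm (lt_of_le_of_ne (not_lt.mp hlt) hbc.symm)
    rwa [mul_comm (th τ c 0), mul_comm (th τ c w)] at this
  fin_cases a <;> fin_cases b <;> fin_cases c <;> simp at ha hb hc hab hac hbc hlt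
  · exact addition_formula_of_factorization (two_mul_th2_sub_mul_th1_add_add hτ)
      (two_mul_th3_mul_th4 hτ) z w
  · exact addition_formula_of_factorization (two_mul_th3_sub_mul_th1_add_add hτ)
      (two_mul_th2_mul_th4 hτ) z w
  · exact addition_formula_of_factorization (two_mul_th4_sub_mul_th1_add_add hτ)
      (two_mul_th2_mul_th3 hτ) z w

theorem statement7_general (τ : ℂ) (hτ : 0 < τ.im) (z q : ℂ) (a b c : Fin 4)
    (ha : a ≠ 0) (hb : b ≠ 0) (hc : c ≠ 0)
    (hab : a ≠ b) (hac : a ≠ c) (hbc : b ≠ c)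
    (h1 : th1 τ (2*q) ≠ 0)
    (h3 : th1 τ z ≠ 0)
    (h4 : th τ b 0 ≠ 0)
    (h5 : th τ c 0 ≠ 0) :
    th τ a (z - 2*q) * psi τ 0 (2*q) z - th τ a (z + 2*q) * psi τ 0 (-(2*q)) z
      = 2 * th1d τ 0 * th τ a z * th τ b (2*q) * th τ c (2*q)
        / (th τ b 0 * th τ c 0 * th1 τ (2*q)) := by
  have hadd := th_addition_formula hτ ha hb hc hab hac hbc z (2 * q)
  rw [psi, psi, show th τ 0 = th1 τ from rfl, th1_neg, add_comm (2 * q), neg_add_eq_sub]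
  field_simp
  linear_combination th1d τ 0 * hadd

theorem statement7 (τ : ℂ) (hτ : 0 < τ.im) (z q : ℂ) (a b c : Fin 4)
    (ha : a ≠ 0) (hb : b ≠ 0) (hc : c ≠ 0)
    (hab : a ≠ b) (hac : a ≠ c) (hbc : b ≠ c)
    (h1 : th1 τ (2*q) ≠ 0)
    (h2 : th1 τ (-(2*q)) ≠ 0)
    (h3 : th1 τ z ≠ 0)
    (h4 : th τ b 0 ≠ 0)
    (h5 : th τ c 0 ≠ 0) :
    th τ a (z - 2*q) * psi τ 0 (2*q) z - th τ a (z + 2*q) * psi τ 0 (-(2*q)) z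
      = 2 * th1d τ 0 * th τ a z * th τ b (2*q) * th τ c (2*q)
        / (th τ b 0 * th τ c 0 * th1 τ (2*q)) :=
  statement7_general τ hτ z q a b c ha hb hc hab hac hbc h1 h3 h4 h5

end RvD
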